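/- Assume Q is symmetric positive definite and W is symmetric positive definite, and define Λ_W(X) = (A (X + Cᵀ W⁻¹ C)⁻¹ Aᵀ + Q)⁻¹. Then Λ_W is monotone on the positive semidefinite cone: for symmetric matrices X₁ ≥ X₂ ≥ 0 (with X₂ + CᵀW⁻¹C invertible), Λ_W(X₁) ≥ Λ_W(X₂). (Monotonicity of the information-form map, Appendix C.) -/

import Mathlib

/-!
In the Loewner order, `X ↦ X + CᵀW⁻¹C` and `Y ↦ A Y Aᵀ + Q` are monotone while inversion is
antitone on positive definite matrices; `Λ_W` composes these maps with two inversions. The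
matrices being inverted are positive definite because `X₂ + CᵀW⁻¹C` is positive semidefinite and
invertible, and `Q > 0`.
-/

open Matrix

/-- The information-form map `Λ_W(X) = (A (X + CᵀW⁻¹C)⁻¹ Aᵀ + Q)⁻¹`. -/
noncomputable def LamW {n m : ℕ} (A Q : Matrix (Fin n) (Fin n) ℝ)
    (C : Matrix (Fin m) (Fin n) ℝ) (W : Matrix (Fin m) (Fin m) ℝ)
    (X : Matrix (Fin n) (Fin n) ℝ) : Matrix (Fin n) (Fin n) ℝ :=
  (A * (X + Cᵀ * W⁻¹ * C)⁻¹ * Aᵀ + Q)⁻¹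

open scoped MatrixOrder ComplexOrder

namespace Matrix

variable {n 𝕜 : Type*} [RCLike 𝕜] {A B : Matrix n n 𝕜}

theorem PosDef.of_le (hA : A.PosDef) (hAB : A ≤ B) : B.PosDef := by
  simpa using hA.add_posSemidef hAB

variable [Fintype n] [DecidableEq n]

theorem PosDef.inv_le_inv (hA : A.PosDef) (hAB : A ≤ B) : B⁻¹ ≤ A⁻¹ := by
  have hB := hA.of_le hAB
  have hAdet := (isUnit_iff_isUnit_det A).mp hA.isUnit
  have hBdet := (isUnit_iff_isUnit_det B).mp hB.isUnit
  set D := B - A with hD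
  have hDpsd : D.PosSemidef := le_iff.mp hAB
  -- `A⁻¹ - B⁻¹ = A⁻¹ D B⁻¹` becomes manifestly positive after `A⁻¹ = B⁻¹ B A⁻¹` and `B = A + D`.
  have hsymm : A⁻¹ - B⁻¹ = B⁻¹ * (D + Dᴴ * A⁻¹ * D) * B⁻¹ := by
    have hBAD : B * A⁻¹ * D = D + D * A⁻¹ * D := by
      rw [show B = A + D by rw [hD, add_sub_cancel], add_mul, mul_nonsing_inv _ hAdet, add_mul,
        one_mul]
    rw [inv_sub_inv (by simp [hA.isUnit, hB.isUnit]), hDpsd.isHermitian.eq, ← hBAD,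
      ← mul_assoc, ← mul_assoc, nonsing_inv_mul _ hBdet, one_mul]
  have hpsd : (D + Dᴴ * A⁻¹ * D).PosSemidef :=
    hDpsd.add (hA.inv.posSemidef.conjTranspose_mul_mul_same D)
  rw [le_iff, hsymm]
  simpa [hB.isHermitian.inv.eq] using hpsd.conjTranspose_mul_mul_same B⁻¹

end Matrix

/-- Monotonicity of the information-form map (Appendix C): if `X₁ ≥ X₂ ≥ 0`
(with `X₂ + CᵀW⁻¹C` invertible), then `Λ_W(X₁) ≥ Λ_W(X₂)`. -/
theorem LamW_monotone {n m : ℕ} (A Q : Matrix (Fin n) (Fin n) ℝ)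
    (C : Matrix (Fin m) (Fin n) ℝ) (W : Matrix (Fin m) (Fin m) ℝ)
    (hQ : Q.PosDef) (hW : W.PosDef)
    (X₁ X₂ : Matrix (Fin n) (Fin n) ℝ)
    (hX₂ : X₂.PosSemidef) (h12 : (X₁ - X₂).PosSemidef)
    (hinv : IsUnit (X₂ + Cᵀ * W⁻¹ * C)) :
    (LamW A Q C W X₁ - LamW A Q C W X₂).PosSemidef := by
  set S := Cᵀ * W⁻¹ * C
  have hS : S.PosSemidef := by
    simpa using hW.inv.posSemidef.conjTranspose_mul_mul_same C
  have hM₂ : (X₂ + S).PosDef := (hX₂.add hS).posDef_iff_isUnit.mpr hinv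
  have hM : X₂ + S ≤ X₁ + S := add_le_add_left (le_iff.mpr h12) S
  have hP : A * (X₁ + S)⁻¹ * Aᵀ + Q ≤ A * (X₂ + S)⁻¹ * Aᵀ + Q := by
    simpa [star_eq_conjTranspose] using
      add_le_add_left (star_right_conjugate_le_conjugate (hM₂.inv_le_inv hM) A) Q
  have hP₁ : (A * (X₁ + S)⁻¹ * Aᵀ + Q).PosDef := by
    simpa using
      PosDef.posSemidef_add ((hM₂.of_le hM).inv.posSemidef.mul_mul_conjTranspose_same A) hQ
  exact hP₁.inv_le_inv hP
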